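/- arXiv:2005.05827 — 2 statements merged into one kernel-verified Lean document; each statement's English description precedes it below -/
import Mathlib

section
/- Let d ≥ 1 and let ζ = {ζ_k}_{k∈ℤ^d} be a stationary random field of real-valued random variables with E[ζ_0] = 0 and Var(ζ_0) < ∞, satisfying σ̄² := Σ_{k∈ℤ^d} |Cov(ζ_0, ζ_k)| < ∞, and set σ² := Σ_{k∈ℤ^d} Cov(ζ_0, ζ_k). Then for every φ ∈ 𝒞, lim_{n→∞} E(|S_n(φ)|²) = σ² ∫_{ℝ^d} |φ(x)|² dx. -/
open MeasureTheory Filter Complex Topology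

noncomputable section

/-- `S ζ n φ ω = n^{-d/2} ∑_{k ∈ ℤ^d} ζ_k(ω) φ(k/n)`. -/
def S {d : ℕ} {Ω : Type*} (ζ : (Fin d → ℤ) → Ω → ℝ) (n : ℕ)
    (φ : (Fin d → ℝ) → ℝ) (ω : Ω) : ℝ :=
  (n : ℝ) ^ (-(d : ℝ) / 2) * ∑' k : Fin d → ℤ, ζ k ω * φ (fun i => (k i : ℝ) / n)

/-- Stationarity of the random field: every lattice shift leaves the law invariant. -/
def Stationary {d : ℕ} {Ω : Type*} [MeasurableSpace Ω] (P : Measure Ω)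
    (ζ : (Fin d → ℤ) → Ω → ℝ) : Prop :=
  ∀ j : Fin d → ℤ,
    Measure.map (fun ω => fun k => ζ (k + j) ω) P
      = Measure.map (fun ω => fun k => ζ k ω) P

/-- Covariance of two real random variables. -/
def cov {Ω : Type*} [MeasurableSpace Ω] (P : Measure Ω) (X Y : Ω → ℝ) : ℝ :=
  ∫ ω, (X ω - ∫ x, X x ∂P) * (Y ω - ∫ x, Y x ∂P) ∂P

/-- Upright boxes `(a₁,b₁] × ⋯ × (a_d,b_d]`. -/
def IsBox {d : ℕ} (Q : Set (Fin d → ℝ)) : Prop :=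
  ∃ a b : Fin d → ℝ, (∀ i, a i < b i) ∧ Q = {x | ∀ i, a i < x i ∧ x i ≤ b i}

/-- The class 𝒰 of finite linear combinations of indicators of upright boxes. -/
def memU {d : ℕ} (φ : (Fin d → ℝ) → ℝ) : Prop :=
  ∃ (m : ℕ) (c : Fin m → ℝ) (Q : Fin m → Set (Fin d → ℝ)),
    (∀ l, IsBox (Q l)) ∧ φ = fun x => ∑ l, c l * (Q l).indicator (fun _ => (1 : ℝ)) x

/-- The class 𝒞 of bounded compactly supported functions continuous off a finite
union of hyperplanes. -/
def memC {d : ℕ} (φ : (Fin d → ℝ) → ℝ) : Prop :=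
  HasCompactSupport φ ∧ (∃ C : ℝ, ∀ x, |φ x| ≤ C) ∧
    ∃ (m : ℕ) (c : Fin m → Fin d → ℝ) (t : Fin m → ℝ),
      (∀ l, c l ≠ 0) ∧
      ContinuousOn φ (⋃ l, {x : Fin d → ℝ | ∑ i, c l i * x i = t l})ᶜ

/-- Separation of two subsets of ℝ^d in the sup metric
(`dist` on `Fin d → ℝ` is `max_i |x i - y i|`). -/
def sep {d : ℕ} (A B : Set (Fin d → ℝ)) : ℝ :=
  sInf (Set.image2 dist A B)

/-- Condition (AI): asymptotic independence of `S_n(φ₁), S_n(φ₂)` for separated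
supports. -/
def AI {d : ℕ} {Ω : Type*} [MeasurableSpace Ω] (P : Measure Ω)
    (ζ : (Fin d → ℤ) → Ω → ℝ) : Prop :=
  ∀ δ : ℝ, 0 < δ → ∀ φ₁ φ₂ : (Fin d → ℝ) → ℝ, memU φ₁ → memU φ₂ →
    δ ≤ sep (Function.support φ₁) (Function.support φ₂) →
    ∀ a b : ℝ,
      Tendsto (fun n : ℕ =>
          (∫ ω, Complex.exp (Complex.I * ((a * S ζ n φ₁ ω + b * S ζ n φ₂ ω : ℝ) : ℂ)) ∂P)
            - (∫ ω, Complex.exp (Complex.I * ((a * S ζ n φ₁ ω : ℝ) : ℂ)) ∂P)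
              * (∫ ω, Complex.exp (Complex.I * ((b * S ζ n φ₂ ω : ℝ) : ℂ)) ∂P))
        atTop (𝓝 0)

/-
Expanding the square and using stationarity,
`E S_n(φ)² = ∑_j Cov(ζ_0, ζ_j) A_n(j)` with `A_n(j) = n^{-d} ∑_k φ(k/n) φ((k+j)/n)`.
Written as the integral over `ℝ^d` of `x ↦ φ(⌈nx⌉/n) φ((⌈nx⌉+j)/n)`, `A_n(j)` tends to `∫ φ²`
by dominated convergence, because `φ` is continuous off a finite union of hyperplanes, a null
set. The same domination bounds `A_n(j)` uniformly in `n` and `j`, so summability of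
`|Cov(ζ_0, ζ_j)|` lets dominated convergence for series finish the proof.
-/

open ProbabilityTheory (IdentDistrib)

namespace Stationary

variable {d : ℕ} {Ω : Type*} [MeasurableSpace Ω] {P : Measure Ω} {ζ : (Fin d → ℤ) → Ω → ℝ}

theorem identDistrib_shift (hstat : Stationary P ζ) (hmeas : ∀ k, Measurable (ζ k))
    (j : Fin d → ℤ) :
    IdentDistrib (fun ω k => ζ (k + j) ω) (fun ω k => ζ k ω) P P where
  aemeasurable_fst := (measurable_pi_lambda _ fun k => hmeas (k + j)).aemeasurable
  aemeasurable_snd := (measurable_pi_lambda _ fun k => hmeas k).aemeasurable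
  map_eq := hstat j

theorem identDistrib_apply (hstat : Stationary P ζ) (hmeas : ∀ k, Measurable (ζ k))
    (j : Fin d → ℤ) : IdentDistrib (ζ j) (ζ 0) P P := by
  simpa [Function.comp_def] using (hstat.identDistrib_shift hmeas j).comp (measurable_pi_apply 0)

theorem integral_mul_eq (hstat : Stationary P ζ) (hmeas : ∀ k, Measurable (ζ k))
    (k l : Fin d → ℤ) : ∫ ω, ζ k ω * ζ l ω ∂P = ∫ ω, ζ 0 ω * ζ (l - k) ω ∂P := by
  simpa using ((hstat.identDistrib_shift hmeas k).comp
    ((measurable_pi_apply 0).mul (measurable_pi_apply (l - k)))).integral_eq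

theorem integral_mul_eq_cov (hstat : Stationary P ζ) (hmeas : ∀ k, Measurable (ζ k))
    (hmean : ∫ ω, ζ 0 ω ∂P = 0) (k l : Fin d → ℤ) :
    ∫ ω, ζ k ω * ζ l ω ∂P = cov P (ζ 0) (ζ (l - k)) := by
  rw [hstat.integral_mul_eq hmeas, cov, (hstat.identDistrib_apply hmeas (l - k)).integral_eq,
    hmean]
  simp

theorem memLp_two (hstat : Stationary P ζ) (hmeas : ∀ k, Measurable (ζ k))
    (hvar : Integrable (fun ω => (ζ 0 ω) ^ 2) P) (k : Fin d → ℤ) : MemLp (ζ k) 2 P :=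
  (hstat.identDistrib_apply hmeas k).memLp_iff.mpr
    ((memLp_two_iff_integrable_sq (hmeas 0).aestronglyMeasurable).mpr hvar)

theorem integral_sq_sum_eq (hstat : Stationary P ζ) (hmeas : ∀ k, Measurable (ζ k))
    (hmean : ∫ ω, ζ 0 ω ∂P = 0) (hvar : Integrable (fun ω => (ζ 0 ω) ^ 2) P)
    (s : Finset (Fin d → ℤ)) (a : (Fin d → ℤ) → ℝ) :
    ∫ ω, (∑ k ∈ s, ζ k ω * a k) ^ 2 ∂P
      = ∑ k ∈ s, ∑ l ∈ s, a k * a l * cov P (ζ 0) (ζ (l - k)) := by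
  have hint : ∀ k l, Integrable (fun ω => a k * a l * (ζ k ω * ζ l ω)) P := fun k l =>
    ((hstat.memLp_two hmeas hvar k).integrable_mul (hstat.memLp_two hmeas hvar l)).const_mul _
  have hexpand : ∀ ω, (∑ k ∈ s, ζ k ω * a k) ^ 2
      = ∑ k ∈ s, ∑ l ∈ s, a k * a l * (ζ k ω * ζ l ω) := fun ω => by
    rw [sq, Finset.sum_mul_sum]
    exact Finset.sum_congr rfl fun k _ => Finset.sum_congr rfl fun l _ => by ring
  simp_rw [hexpand]
  rw [integral_finsetSum _ fun k _ => integrable_finsetSum _ fun l _ => hint k l]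
  refine Finset.sum_congr rfl fun k _ => ?_
  rw [integral_finsetSum _ fun l _ => hint k l]
  refine Finset.sum_congr rfl fun l _ => ?_
  rw [integral_const_mul, hstat.integral_mul_eq_cov hmeas hmean]

end Stationary

theorem Finset.sum_sum_mul_sub_eq_tsum {G : Type*} [AddCommGroup G] {s : Finset G}
    {a : G → ℝ} (ha : ∀ k ∉ s, a k = 0) (c : G → ℝ) :
    ∑ k ∈ s, ∑ l ∈ s, a k * a l * c (l - k) = ∑' j, c j * ∑' k, a k * a (k + j) := by
  have hinner : ∀ k, ∑ l ∈ s, a k * a l * c (l - k) = ∑' j, a k * a (k + j) * c j := fun k =>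
    calc ∑ l ∈ s, a k * a l * c (l - k)
        = ∑' l, a k * a l * c (l - k) :=
          (tsum_eq_sum fun l hl => by rw [ha l hl, mul_zero, zero_mul]).symm
      _ = ∑' j, a k * a (k + j) * c (k + j - k) := ((Equiv.addLeft k).tsum_eq _).symm
      _ = ∑' j, a k * a (k + j) * c j := by simp
  classical
  have hsummable : ∀ k, Summable fun j => a k * a (k + j) * c j := fun k =>
    summable_of_ne_finset_zero (s := s.image (· - k)) fun j hj => by
      rw [ha (k + j) fun h => hj (Finset.mem_image.mpr ⟨k + j, h, add_sub_cancel_left k j⟩),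
        mul_zero, zero_mul]
  rw [Finset.sum_congr rfl fun k _ => hinner k,
    ← Summable.tsum_finsetSum fun k _ => hsummable k]
  refine tsum_congr fun j => ?_
  rw [tsum_eq_sum fun k hk => by rw [ha k hk, zero_mul], Finset.mul_sum]
  exact Finset.sum_congr rfl fun k _ => by ring

section Lattice

variable {d : ℕ}

def latticeIndex (n : ℕ) (x : Fin d → ℝ) : Fin d → ℤ := fun i => ⌈(n : ℝ) * x i⌉

def latticeSample (φ : (Fin d → ℝ) → ℝ) (n : ℕ) (k : Fin d → ℤ) : ℝ :=
  φ fun i => (k i : ℝ) / n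

theorem measurable_latticeIndex (n : ℕ) : Measurable (latticeIndex (d := d) n) :=
  measurable_pi_lambda _ fun i => Int.measurable_ceil.comp ((measurable_pi_apply i).const_mul _)

theorem latticeIndex_preimage_singleton {n : ℕ} (hn : n ≠ 0) (k : Fin d → ℤ) :
    latticeIndex n ⁻¹' {k}
      = Set.univ.pi fun i => Set.Ioc (((k i : ℝ) - 1) / n) ((k i : ℝ) / n) := by
  have hn : (0 : ℝ) < n := by positivity
  ext x
  simp only [Set.mem_preimage, Set.mem_singleton_iff, Set.mem_univ_pi, Set.mem_Ioc, funext_iff,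
    latticeIndex, Int.ceil_eq_iff, div_lt_iff₀ hn, le_div_iff₀ hn, mul_comm (x _)]

theorem map_latticeIndex_volume {n : ℕ} (hn : n ≠ 0) :
    volume.map (latticeIndex (d := d) n) = ENNReal.ofReal ((n : ℝ) ^ d)⁻¹ • Measure.count := by
  refine Measure.ext_iff_singleton.mpr fun k => ?_
  rw [Measure.map_apply (measurable_latticeIndex n) (measurableSet_singleton k),
    latticeIndex_preimage_singleton hn, Real.volume_pi_Ioc]
  simp only [Measure.smul_apply, Measure.count_singleton, smul_eq_mul, mul_one]
  have hside : ∀ i, (k i : ℝ) / n - ((k i : ℝ) - 1) / n = (n : ℝ)⁻¹ := fun i => by ring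
  simp only [hside, Finset.prod_const, Finset.card_univ, Fintype.card_fin,
    ← ENNReal.ofReal_pow (inv_nonneg.mpr n.cast_nonneg), inv_pow]

theorem integral_comp_latticeIndex {n : ℕ} (hn : n ≠ 0) {f : (Fin d → ℤ) → ℝ}
    (hf : Summable f) :
    ∫ x, f (latticeIndex n x) = ((n : ℝ) ^ d)⁻¹ * ∑' k, f k := by
  rw [← integral_map (measurable_latticeIndex n).aemeasurable
      (measurable_of_countable f).aestronglyMeasurable, map_latticeIndex_volume hn,
    integral_smul_measure, integral_countable (integrable_count_iff.mpr hf.norm)]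
  simp

theorem ceil_mul_add_div_mem_Icc {n : ℝ} (hn : 0 < n) (a : ℝ) (m : ℤ) :
    ((⌈n * a⌉ + m : ℤ) : ℝ) / n ∈ Set.Icc (a + m / n) (a + (m + 1) / n) := by
  rw [Set.mem_Icc, le_div_iff₀ hn, div_le_iff₀ hn, add_mul, add_mul, div_mul_cancel₀ _ hn.ne',
    div_mul_cancel₀ _ hn.ne', mul_comm a, Int.cast_add]
  constructor <;> linarith [Int.le_ceil (n * a), Int.ceil_lt_add_one (n * a)]

theorem dist_latticeIndex_div_le {n : ℕ} (hn : n ≠ 0) (x : Fin d → ℝ) :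
    dist (fun i => (latticeIndex n x i : ℝ) / n) x ≤ 1 / n := by
  refine (dist_pi_le_iff (by positivity)).mpr fun i => ?_
  have h : ((latticeIndex n x i : ℤ) : ℝ) / n ∈ Set.Icc (x i) (x i + 1 / n) := by
    simpa [latticeIndex] using ceil_mul_add_div_mem_Icc (n := n) (by positivity) (x i) 0
  have hpos : (0 : ℝ) ≤ 1 / n := by positivity
  rw [Real.dist_eq, abs_le]
  constructor <;> linarith [h.1, h.2]

theorem tendsto_latticeIndex_add_div (x : Fin d → ℝ) (j : Fin d → ℤ) :
    Tendsto (fun n : ℕ => fun i => ((latticeIndex n x + j) i : ℝ) / n) atTop (𝓝 x) := by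
  refine tendsto_pi_nhds.mpr fun i => ?_
  have hlim : ∀ c : ℝ, Tendsto (fun n : ℕ => x i + c / n) atTop (𝓝 (x i)) := fun c => by
    simpa using tendsto_const_nhds.add (tendsto_const_div_atTop_nhds_zero_nat c)
  have hbounds : ∀ᶠ n : ℕ in atTop, ((latticeIndex n x + j) i : ℝ) / n
      ∈ Set.Icc (x i + j i / n) (x i + (j i + 1) / n) := by
    filter_upwards [eventually_gt_atTop 0] with n hn
    exact ceil_mul_add_div_mem_Icc (by positivity) (x i) (j i)
  exact tendsto_of_tendsto_of_tendsto_of_le_of_le' (hlim _) (hlim _)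
    (hbounds.mono fun _ h => h.1) (hbounds.mono fun _ h => h.2)

theorem finite_support_latticeSample {φ : (Fin d → ℝ) → ℝ} (hφ : HasCompactSupport φ) {n : ℕ}
    (hn : n ≠ 0) : (Function.support (latticeSample φ n)).Finite := by
  have hemb : Topology.IsClosedEmbedding fun (k : Fin d → ℤ) (i : Fin d) => (k i : ℝ) / n :=
    Topology.IsClosedEmbedding.piMap fun _ =>
      (Homeomorph.mulRight₀ _ (inv_ne_zero (Nat.cast_ne_zero.mpr hn))).isClosedEmbedding.comp
        Int.isClosedEmbedding_coe_real
  exact (hφ.comp_isClosedEmbedding hemb).isCompact.finite_of_discrete.subset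
    (subset_tsupport _)

theorem latticeSample_latticeIndex_eq_zero {φ : (Fin d → ℝ) → ℝ} {n : ℕ} (hn : n ≠ 0)
    {x : Fin d → ℝ} (hx : x ∉ Metric.cthickening 1 (tsupport φ)) :
    latticeSample φ n (latticeIndex n x) = 0 := by
  refine image_eq_zero_of_notMem_tsupport (f := φ) fun hmem => hx ?_
  refine Metric.mem_cthickening_of_dist_le x _ 1 _ hmem ?_
  rw [dist_comm]
  refine (dist_latticeIndex_div_le hn x).trans ?_
  rw [one_div]
  exact inv_le_one_of_one_le₀ (Nat.one_le_cast.mpr (Nat.one_le_iff_ne_zero.mpr hn))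

end Lattice

theorem addHaar_preimage_singleton_eq_zero {E : Type*} [NormedAddCommGroup E] [NormedSpace ℝ E]
    [MeasurableSpace E] [BorelSpace E] [FiniteDimensional ℝ E] (μ : Measure E)
    [μ.IsAddHaarMeasure] {L : E →ₗ[ℝ] ℝ} (hL : L ≠ 0) (t : ℝ) : μ (L ⁻¹' {t}) = 0 := by
  obtain ⟨v, hv⟩ : ∃ v, L v ≠ 0 := by simpa [LinearMap.ext_iff] using hL
  set x₀ := (t / L v) • v
  have hx₀ : L x₀ = t := by simp [x₀, hv]
  have hset : L ⁻¹' {t} = (fun x => -x₀ + x) ⁻¹' (LinearMap.ker L : Set E) := by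
    ext x
    simp [hx₀, sub_eq_zero, neg_add_eq_sub]
  rw [hset, measure_preimage_add]
  exact Measure.addHaar_submodule μ _ (by rwa [Ne, LinearMap.ker_eq_top])

theorem volume_hyperplane {d : ℕ} {c : Fin d → ℝ} (hc : c ≠ 0) (t : ℝ) :
    volume {x : Fin d → ℝ | ∑ i, c i * x i = t} = 0 := by
  let L : (Fin d → ℝ) →ₗ[ℝ] ℝ := ∑ i, c i • LinearMap.proj i
  have hL : ∀ x, L x = ∑ i, c i * x i := fun x => by simp [L]
  obtain ⟨i, hi⟩ := Function.ne_iff.mp hc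
  have hL0 : L ≠ 0 := fun h => hi <| by
    simpa [hL, Pi.single_apply] using LinearMap.congr_fun h (Pi.single i 1)
  simpa [Set.preimage, hL] using addHaar_preimage_singleton_eq_zero volume hL0 t

theorem memC.ae_continuousAt {d : ℕ} {φ : (Fin d → ℝ) → ℝ} (hφ : memC φ) :
    ∀ᵐ x, ContinuousAt φ x := by
  obtain ⟨-, -, m, c, t, hc, hcont⟩ := hφ
  set N := ⋃ l, {x : Fin d → ℝ | ∑ i, c l i * x i = t l}
  have hN : IsClosed N := isClosed_iUnion_of_finite fun l =>
    isClosed_eq (continuous_finsetSum _ fun i _ => continuous_const.mul (continuous_apply i))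
      continuous_const
  have hN0 : volume N = 0 := measure_iUnion_null fun l => volume_hyperplane (hc l) (t l)
  filter_upwards [measure_eq_zero_iff_ae_notMem.mp hN0] with x hx
  exact hcont.continuousAt (hN.isOpen_compl.mem_nhds hx)

section LaggedStepIntegral

variable {d : ℕ}

def laggedStepIntegral (φ : (Fin d → ℝ) → ℝ) (n : ℕ) (j : Fin d → ℤ) : ℝ :=
  ∫ x, latticeSample φ n (latticeIndex n x) * latticeSample φ n (latticeIndex n x + j)

theorem norm_latticeSample_mul_le {φ : (Fin d → ℝ) → ℝ} {B : ℝ} (hB : ∀ x, |φ x| ≤ B) {n : ℕ}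
    (hn : n ≠ 0) (j : Fin d → ℤ) (x : Fin d → ℝ) :
    ‖latticeSample φ n (latticeIndex n x) * latticeSample φ n (latticeIndex n x + j)‖
      ≤ (Metric.cthickening 1 (tsupport φ)).indicator (fun _ => B * B) x := by
  by_cases hx : x ∈ Metric.cthickening 1 (tsupport φ)
  · rw [Set.indicator_of_mem hx, Real.norm_eq_abs, abs_mul]
    exact mul_le_mul (hB _) (hB _) (abs_nonneg _) ((abs_nonneg _).trans (hB 0))
  · rw [Set.indicator_of_notMem hx, latticeSample_latticeIndex_eq_zero hn hx, zero_mul, norm_zero]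

theorem integrable_indicator_cthickening_tsupport {φ : (Fin d → ℝ) → ℝ}
    (hφ : HasCompactSupport φ) (c : ℝ) :
    Integrable ((Metric.cthickening 1 (tsupport φ)).indicator fun _ => c) :=
  (integrable_indicator_iff Metric.isClosed_cthickening.measurableSet).mpr
    (integrableOn_const hφ.isCompact.cthickening.measure_lt_top.ne)

theorem abs_laggedStepIntegral_le {φ : (Fin d → ℝ) → ℝ} (hφ : HasCompactSupport φ) {B : ℝ}
    (hB : ∀ x, |φ x| ≤ B) {n : ℕ} (hn : n ≠ 0) (j : Fin d → ℤ) :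
    |laggedStepIntegral φ n j|
      ≤ ∫ x, (Metric.cthickening 1 (tsupport φ)).indicator (fun _ => B * B) x :=
  norm_integral_le_of_norm_le (integrable_indicator_cthickening_tsupport hφ _)
    (ae_of_all _ (norm_latticeSample_mul_le hB hn j))

theorem tendsto_latticeSample_latticeIndex_add {φ : (Fin d → ℝ) → ℝ} {x : Fin d → ℝ}
    (hx : ContinuousAt φ x) (j : Fin d → ℤ) :
    Tendsto (fun n => latticeSample φ n (latticeIndex n x + j)) atTop (𝓝 (φ x)) :=
  hx.tendsto.comp (tendsto_latticeIndex_add_div x j)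

theorem tendsto_laggedStepIntegral {φ : (Fin d → ℝ) → ℝ} (hφ : memC φ) (j : Fin d → ℤ) :
    Tendsto (fun n => laggedStepIntegral φ n j) atTop (𝓝 (∫ x, φ x ^ 2)) := by
  have ⟨hcs, ⟨B, hB⟩, _⟩ := hφ
  refine tendsto_integral_filter_of_dominated_convergence _
    (Eventually.of_forall fun n => ((measurable_of_countable fun k =>
      latticeSample φ n k * latticeSample φ n (k + j)).comp
      (measurable_latticeIndex n)).aestronglyMeasurable)
    ((eventually_ne_atTop 0).mono fun n hn => ae_of_all _ (norm_latticeSample_mul_le hB hn j))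
    (integrable_indicator_cthickening_tsupport hcs _) ?_
  filter_upwards [hφ.ae_continuousAt] with x hx
  simpa [sq] using (tendsto_latticeSample_latticeIndex_add hx 0).mul
    (tendsto_latticeSample_latticeIndex_add hx j)

end LaggedStepIntegral

theorem S_eq_sum {d : ℕ} {Ω : Type*} (ζ : (Fin d → ℤ) → Ω → ℝ) {n : ℕ}
    {φ : (Fin d → ℝ) → ℝ} {s : Finset (Fin d → ℤ)} (hs : ∀ k ∉ s, latticeSample φ n k = 0)
    (ω : Ω) : S ζ n φ ω = (n : ℝ) ^ (-(d : ℝ) / 2) * ∑ k ∈ s, ζ k ω * latticeSample φ n k := by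
  rw [S]
  exact congrArg _ (tsum_eq_sum fun k hk => mul_eq_zero_of_right _ (hs k hk))

theorem Real.rpow_neg_half_sq {x : ℝ} (hx : 0 ≤ x) (d : ℕ) :
    (x ^ (-(d : ℝ) / 2)) ^ 2 = (x ^ d)⁻¹ := by
  rw [← Real.rpow_natCast _ 2, ← Real.rpow_mul hx, ← Real.rpow_natCast, ← Real.rpow_neg hx]
  norm_num

theorem integral_sq_S_eq {d : ℕ} {Ω : Type*} [MeasurableSpace Ω] {P : Measure Ω}
    {ζ : (Fin d → ℤ) → Ω → ℝ} (hmeas : ∀ k, Measurable (ζ k)) (hstat : Stationary P ζ)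
    (hmean : ∫ ω, ζ 0 ω ∂P = 0) (hvar : Integrable (fun ω => (ζ 0 ω) ^ 2) P)
    {φ : (Fin d → ℝ) → ℝ} (hφ : HasCompactSupport φ) {n : ℕ} (hn : n ≠ 0) :
    ∫ ω, (S ζ n φ ω) ^ 2 ∂P = ∑' j, cov P (ζ 0) (ζ j) * laggedStepIntegral φ n j := by
  have hfin := finite_support_latticeSample hφ hn
  have hs : ∀ k ∉ hfin.toFinset, latticeSample φ n k = 0 := fun k hk =>
    Function.notMem_support.mp fun h => hk (hfin.mem_toFinset.mpr h)
  simp_rw [S_eq_sum ζ hs, mul_pow, Real.rpow_neg_half_sq n.cast_nonneg]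
  rw [integral_const_mul, hstat.integral_sq_sum_eq hmeas hmean hvar,
    Finset.sum_sum_mul_sub_eq_tsum hs fun j => cov P (ζ 0) (ζ j), ← tsum_mul_left]
  refine tsum_congr fun j => ?_
  have hsum : Summable fun k => latticeSample φ n k * latticeSample φ n (k + j) :=
    summable_of_ne_finset_zero fun k hk => mul_eq_zero_of_left (hs k hk) _
  rw [laggedStepIntegral, integral_comp_latticeIndex hn hsum]
  ring

theorem stmt3_general {d : ℕ} {Ω : Type*} [MeasurableSpace Ω]
    (P : Measure Ω)
    (ζ : (Fin d → ℤ) → Ω → ℝ)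
    (hmeas : ∀ k, Measurable (ζ k))
    (hstat : Stationary P ζ)
    (hmean : ∫ ω, ζ 0 ω ∂P = 0)
    (hvar : Integrable (fun ω => (ζ 0 ω) ^ 2) P)
    (hSRD : Summable (fun k : Fin d → ℤ => |cov P (ζ 0) (ζ k)|))
    (φ : (Fin d → ℝ) → ℝ) (hφ : memC φ) :
    Tendsto (fun n : ℕ => ∫ ω, (S ζ n φ ω) ^ 2 ∂P) atTop
      (𝓝 ((∑' k : Fin d → ℤ, cov P (ζ 0) (ζ k)) * ∫ x : Fin d → ℝ, (φ x) ^ 2)) := by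
  have ⟨hcs, ⟨B, hB⟩, _⟩ := hφ
  set M := ∫ x, (Metric.cthickening 1 (tsupport φ)).indicator (fun _ => B * B) x
  rw [← tsum_mul_right]
  refine (tendsto_tsum_of_dominated_convergence (hSRD.mul_right M)
    (fun j => (tendsto_laggedStepIntegral hφ j).const_mul _) ?_).congr' ?_
  · filter_upwards [eventually_ne_atTop 0] with n hn j
    rw [norm_mul, Real.norm_eq_abs]
    exact mul_le_mul_of_nonneg_left (abs_laggedStepIntegral_le hcs hB hn j) (abs_nonneg _)
  · filter_upwards [eventually_ne_atTop 0] with n hn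
    exact (integral_sq_S_eq hmeas hstat hmean hvar hcs hn).symm

/-- For a stationary, short-range dependent field and `φ ∈ 𝒞`,
`E(|S_n(φ)|²) → σ² ∫_{ℝ^d} |φ(x)|² dx` as `n → ∞`. -/
theorem stmt3 {d : ℕ} [NeZero d] {Ω : Type*} [MeasurableSpace Ω]
    (P : Measure Ω) [IsProbabilityMeasure P]
    (ζ : (Fin d → ℤ) → Ω → ℝ)
    (hmeas : ∀ k, Measurable (ζ k))
    (hstat : Stationary P ζ)
    (hmean : ∫ ω, ζ 0 ω ∂P = 0)
    (hvar : Integrable (fun ω => (ζ 0 ω) ^ 2) P)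
    (hSRD : Summable (fun k : Fin d → ℤ => |cov P (ζ 0) (ζ k)|))
    (φ : (Fin d → ℝ) → ℝ) (hφ : memC φ) :
    Tendsto (fun n : ℕ => ∫ ω, (S ζ n φ ω) ^ 2 ∂P) atTop
      (𝓝 ((∑' k : Fin d → ℤ, cov P (ζ 0) (ζ k)) * ∫ x : Fin d → ℝ, (φ x) ^ 2)) :=
  stmt3_general P ζ hmeas hstat hmean hvar hSRD φ hφ
end
end

section
/- Let d ≥ 1 and let ζ = {ζ_k}_{k∈ℤ^d} be a random field of real-valued random variables on a probability space, and define S_n(φ) := n^{−d/2} Σ_{k∈ℤ^d} ζ_k φ(k/n) for φ with compact support. Let δ > 0, and suppose that for all ψ₁, ψ₂ ∈ 𝒰 with sep(supp ψ₁, supp ψ₂) ≥ δ, the pair (S_n(ψ₁), S_n(ψ₂)) is asymptotically independent as n → ∞, i.e., for all a, b ∈ ℝ, E[e^{iaS_n(ψ₁)+ibS_n(ψ₂)}] − E[e^{iaS_n(ψ₁)}]E[e^{ibS_n(ψ₂)}] → 0. Then for every integer N ≥ 2 and all φ₁, …, φ_N ∈ 𝒰 satisfying sep(supp φ_i, supp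 φ_j) ≥ δ for all 1 ≤ i ≠ j ≤ N, the random variables S_n(φ₁), …, S_n(φ_N) are asymptotically independent as n → ∞: for all ξ₁, …, ξ_N ∈ ℝ, E[e^{i(ξ₁S_n(φ₁)+⋯+ξ_N S_n(φ_N))}] − Π_{j=1}^N E[e^{iξ_j S_n(φ_j)}] → 0 as n → ∞. -/
open MeasureTheory Filter Complex Topology

noncomputable section

/-!
Induct on `N`. For `n ≥ 1` the sum defining `S_n(φ)` is finite, so `S_n` is linear on `𝒰` and
`ξ₁ S_n(φ₁) + ⋯ + ξ_N S_n(φ_N) = S_n(ψ) + ξ_{N+1} S_n(φ_{N+1})` with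
`ψ = ξ₁ φ₁ + ⋯ + ξ_N φ_N ∈ 𝒰`. The support of `ψ` lies in the union of those of `φ₁, …, φ_N`, so
it is `δ`-separated from that of `φ_{N+1}`, and the pair hypothesis splits off the last factor;
the induction hypothesis handles `E[e^{i S_n(ψ)}]`, the error being multiplied by a
characteristic function of modulus at most `1`.
-/

def boxIndicators (d : ℕ) : Set ((Fin d → ℝ) → ℝ) :=
  {f | ∃ Q, IsBox Q ∧ f = Q.indicator fun _ => 1}

lemma memU_iff_mem_span {d : ℕ} {φ : (Fin d → ℝ) → ℝ} :
    memU φ ↔ φ ∈ Submodule.span ℝ (boxIndicators d) := by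
  rw [Submodule.mem_span_set']
  constructor
  · rintro ⟨m, c, Q, hQ, rfl⟩
    exact ⟨m, c, fun l => ⟨_, Q l, hQ l, rfl⟩, by ext; simp⟩
  · rintro ⟨m, c, f, rfl⟩
    choose Q hQ hf using fun l => (f l).2
    exact ⟨m, c, Q, hQ, by ext; simp [hf]⟩

lemma memU_sum_mul {d : ℕ} {ι : Type*} (s : Finset ι) (c : ι → ℝ)
    {g : ι → (Fin d → ℝ) → ℝ} (hg : ∀ j ∈ s, memU (g j)) :
    memU fun x => ∑ j ∈ s, c j * g j x := by
  rw [memU_iff_mem_span]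
  convert Submodule.sum_mem _ fun j hj =>
    Submodule.smul_mem _ (c j) (memU_iff_mem_span.1 (hg j hj)) using 1
  ext x
  simp [Finset.sum_apply]

lemma IsBox.isBounded {d : ℕ} {Q : Set (Fin d → ℝ)} (hQ : IsBox Q) : Bornology.IsBounded Q := by
  obtain ⟨a, b, -, rfl⟩ := hQ
  exact (Metric.isBounded_Icc a b).subset fun x hx => ⟨fun i => (hx i).1.le, fun i => (hx i).2⟩

lemma memU.isBounded_support {d : ℕ} {φ : (Fin d → ℝ) → ℝ} (hφ : memU φ) :
    Bornology.IsBounded (Function.support φ) := by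
  rw [memU_iff_mem_span] at hφ
  induction hφ using Submodule.span_induction with
  | mem f hf =>
    obtain ⟨Q, hQ, rfl⟩ := hf
    exact hQ.isBounded.subset Set.support_indicator_subset
  | zero => simp
  | add f g _ _ hf hg => exact (hf.union hg).subset (Function.support_add f g)
  | smul c f _ hf => exact hf.subset (Function.support_const_smul_subset c f)

lemma finite_support_comp_div {d : ℕ} {φ : (Fin d → ℝ) → ℝ}
    (hφ : Bornology.IsBounded (Function.support φ)) {n : ℕ} (hn : n ≠ 0) :
    (Function.support fun k : Fin d → ℤ => φ (fun i => (k i : ℝ) / n)).Finite := by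
  have hcast : Tendsto (fun k : Fin d → ℤ => fun i => (k i : ℝ)) cofinite (cocompact _) := by
    simpa only [coprodᵢ_cofinite, coprodᵢ_cocompact] using
      Tendsto.pi_map_coprodᵢ fun _ : Fin d => Int.tendsto_coe_cofinite
  have hscale : Tendsto (fun x : Fin d → ℝ => (n : ℝ)⁻¹ • x) (cocompact _) (cocompact _) :=
    (Homeomorph.smulOfNeZero ((n : ℝ)⁻¹) (by positivity)).isClosedEmbedding.tendsto_cocompact
  have h := (hscale.comp hcast) hφ.isCompact_closure.compl_mem_cocompact
  refine (mem_cofinite.1 h).subset fun k hk => ?_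
  have hk' : (n : ℝ)⁻¹ • (fun i => (k i : ℝ)) ∈ Function.support φ := by
    simpa [Pi.smul_def, div_eq_inv_mul] using hk
  simpa using subset_closure hk'

lemma summable_mul_comp_div {d : ℕ} {φ : (Fin d → ℝ) → ℝ}
    (hφ : Bornology.IsBounded (Function.support φ)) {n : ℕ} (hn : n ≠ 0) (f : (Fin d → ℤ) → ℝ) :
    Summable fun k : Fin d → ℤ => f k * φ (fun i => (k i : ℝ) / n) :=
  summable_of_hasFiniteSupport <|
    (finite_support_comp_div hφ hn).subset (Function.support_mul_subset_right _ _)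

lemma S_zero {d : ℕ} {Ω : Type*} (ζ : (Fin d → ℤ) → Ω → ℝ) (n : ℕ) (ω : Ω) :
    S ζ n 0 ω = 0 := by
  simp [S]

/-- For `n = 0` the series defining `S` is `∑' k, ζ k ω * φ 0`, which need not be summable. -/
lemma S_sum_mul {d : ℕ} {Ω : Type*} (ζ : (Fin d → ℤ) → Ω → ℝ) {n : ℕ} (hn : n ≠ 0)
    {ι : Type*} (s : Finset ι) (c : ι → ℝ) (g : ι → (Fin d → ℝ) → ℝ)
    (hg : ∀ j ∈ s, Bornology.IsBounded (Function.support (g j))) (ω : Ω) :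
    S ζ n (fun x => ∑ j ∈ s, c j * g j x) ω = ∑ j ∈ s, c j * S ζ n (g j) ω := by
  have hsum : ∀ j ∈ s, Summable fun k : Fin d → ℤ =>
      c j * (ζ k ω * g j (fun i => (k i : ℝ) / n)) :=
    fun j hj => (summable_mul_comp_div (hg j hj) hn _).mul_left (c j)
  simp only [S, Finset.mul_sum, mul_left_comm (ζ _ ω) (c _), Summable.tsum_finsetSum hsum,
    tsum_mul_left, mul_left_comm _ (c _)]

lemma le_dist_of_le_sep {d : ℕ} {A B : Set (Fin d → ℝ)} {δ : ℝ} (h : δ ≤ sep A B)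
    {x y : Fin d → ℝ} (hx : x ∈ A) (hy : y ∈ B) : δ ≤ dist x y :=
  h.trans <| csInf_le ⟨0, by rintro _ ⟨a, -, b, -, rfl⟩; exact dist_nonneg⟩
    (Set.mem_image2_of_mem hx hy)

lemma le_sep_of_forall_le_dist {d : ℕ} {A B : Set (Fin d → ℝ)} {δ : ℝ}
    (hA : A.Nonempty) (hB : B.Nonempty) (h : ∀ x ∈ A, ∀ y ∈ B, δ ≤ dist x y) :
    δ ≤ sep A B :=
  le_csInf (hA.image2 hB) <| by rintro _ ⟨x, hx, y, hy, rfl⟩; exact h x hx y hy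

/-- Condition (AI) at the fixed separation `δ`. -/
def AsympIndepOfSep {d : ℕ} {Ω : Type*} [MeasurableSpace Ω] (P : Measure Ω)
    (ζ : (Fin d → ℤ) → Ω → ℝ) (δ : ℝ) : Prop :=
  ∀ ψ₁ ψ₂ : (Fin d → ℝ) → ℝ, memU ψ₁ → memU ψ₂ →
    δ ≤ sep (Function.support ψ₁) (Function.support ψ₂) →
    ∀ a b : ℝ,
      Tendsto (fun n : ℕ =>
        (∫ ω, Complex.exp (Complex.I * ((a * S ζ n ψ₁ ω + b * S ζ n ψ₂ ω : ℝ) : ℂ)) ∂P)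
          - (∫ ω, Complex.exp (Complex.I * ((a * S ζ n ψ₁ ω : ℝ) : ℂ)) ∂P)
            * (∫ ω, Complex.exp (Complex.I * ((b * S ζ n ψ₂ ω : ℝ) : ℂ)) ∂P))
        atTop (𝓝 0)

/-- An empty support has `sep = sInf ∅ = 0`, but then `ψᵢ = 0` and the defect vanishes
identically, so pointwise separation of the supports suffices. -/
lemma AsympIndepOfSep.tendsto {d : ℕ} {Ω : Type*} [MeasurableSpace Ω] {P : Measure Ω}
    [IsProbabilityMeasure P] {ζ : (Fin d → ℤ) → Ω → ℝ} {δ : ℝ} (hAI : AsympIndepOfSep P ζ δ)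
    {ψ₁ ψ₂ : (Fin d → ℝ) → ℝ} (hψ₁ : memU ψ₁) (hψ₂ : memU ψ₂)
    (hsep : ∀ x ∈ Function.support ψ₁, ∀ y ∈ Function.support ψ₂, δ ≤ dist x y) (a b : ℝ) :
    Tendsto (fun n : ℕ =>
      (∫ ω, Complex.exp (Complex.I * ((a * S ζ n ψ₁ ω + b * S ζ n ψ₂ ω : ℝ) : ℂ)) ∂P)
        - (∫ ω, Complex.exp (Complex.I * ((a * S ζ n ψ₁ ω : ℝ) : ℂ)) ∂P)
          * (∫ ω, Complex.exp (Complex.I * ((b * S ζ n ψ₂ ω : ℝ) : ℂ)) ∂P))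
      atTop (𝓝 0) := by
  rcases (Function.support ψ₁).eq_empty_or_nonempty with h₁ | h₁
  · rw [Function.support_eq_empty_iff] at h₁
    simp [h₁, S_zero]
  rcases (Function.support ψ₂).eq_empty_or_nonempty with h₂ | h₂
  · rw [Function.support_eq_empty_iff] at h₂
    simp [h₂, S_zero]
  exact hAI ψ₁ ψ₂ hψ₁ hψ₂ (le_sep_of_forall_le_dist h₁ h₂ hsep) a b

lemma norm_integral_exp_I_mul_le_one {Ω : Type*} [MeasurableSpace Ω] (P : Measure Ω)
    [IsProbabilityMeasure P] (X : Ω → ℝ) :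
    ‖∫ ω, Complex.exp (Complex.I * (X ω : ℂ)) ∂P‖ ≤ 1 := by
  refine (norm_integral_le_integral_norm _).trans_eq ?_
  simp [Complex.norm_exp]

lemma tendsto_sub_mul_of_tendsto_sub {α R : Type*} [NonUnitalSeminormedRing R] {l : Filter α}
    {a b c p : α → R} (habc : Tendsto (fun n => a n - b n * c n) l (𝓝 0))
    (hbp : Tendsto (fun n => b n - p n) l (𝓝 0))
    (hc : IsBoundedUnder (· ≤ ·) l fun n => ‖c n‖) :
    Tendsto (fun n => a n - p n * c n) l (𝓝 0) := by
  simpa [sub_mul] using habc.add (hbp.zero_mul_isBoundedUnder_le hc)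

theorem stmt5_general {d : ℕ} {Ω : Type*} [MeasurableSpace Ω]
    (P : Measure Ω) [IsProbabilityMeasure P]
    (ζ : (Fin d → ℤ) → Ω → ℝ)
    (δ : ℝ)
    (hpair : ∀ ψ₁ ψ₂ : (Fin d → ℝ) → ℝ, memU ψ₁ → memU ψ₂ →
      δ ≤ sep (Function.support ψ₁) (Function.support ψ₂) →
      ∀ a b : ℝ,
        Tendsto (fun n : ℕ =>
          (∫ ω, Complex.exp (Complex.I * ((a * S ζ n ψ₁ ω + b * S ζ n ψ₂ ω : ℝ) : ℂ)) ∂P)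
            - (∫ ω, Complex.exp (Complex.I * ((a * S ζ n ψ₁ ω : ℝ) : ℂ)) ∂P)
              * (∫ ω, Complex.exp (Complex.I * ((b * S ζ n ψ₂ ω : ℝ) : ℂ)) ∂P))
          atTop (𝓝 0)) :
    ∀ N : ℕ, 2 ≤ N → ∀ φ : Fin N → (Fin d → ℝ) → ℝ, (∀ j, memU (φ j)) →
      (∀ i j, i ≠ j → δ ≤ sep (Function.support (φ i)) (Function.support (φ j))) →
      ∀ ξ : Fin N → ℝ,
        Tendsto (fun n : ℕ =>
          (∫ ω, Complex.exp (Complex.I * ((∑ j, ξ j * S ζ n (φ j) ω : ℝ) : ℂ)) ∂P)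
            - ∏ j, ∫ ω, Complex.exp (Complex.I * ((ξ j * S ζ n (φ j) ω : ℝ) : ℂ)) ∂P)
          atTop (𝓝 0) := by
  rintro N - φ hφ hsep ξ
  induction N with
  | zero => simp
  | succ N ih =>
    set ψ := fun x => ∑ j : Fin N, ξ j.castSucc * φ j.castSucc x
    have hψ : memU ψ := memU_sum_mul _ _ fun j _ => hφ j.castSucc
    have hSψ : ∀ᶠ n in atTop, ∀ ω,
        S ζ n ψ ω = ∑ j : Fin N, ξ j.castSucc * S ζ n (φ j.castSucc) ω := by
      filter_upwards [eventually_ne_atTop 0] with n hn ω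
      exact S_sum_mul ζ hn _ _ _ (fun j _ => (hφ _).isBounded_support) ω
    have hψsep : ∀ x ∈ Function.support ψ, ∀ y ∈ Function.support (φ (Fin.last N)),
        δ ≤ dist x y := by
      intro x hx y hy
      obtain ⟨j, -, hj⟩ := Set.mem_iUnion₂.1 (Finset.support_sum _ _ hx)
      exact le_dist_of_le_sep (hsep _ _ (Fin.castSucc_lt_last j).ne)
        (Function.support_mul_subset_right _ _ hj) hy
    have hlast := AsympIndepOfSep.tendsto hpair hψ (hφ (Fin.last N)) hψsep 1 (ξ (Fin.last N))
    have hinit := ih (fun j => φ j.castSucc) (fun j => hφ _)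
      (fun i j hij => hsep _ _ ((Fin.castSucc_injective N).ne hij)) (fun j => ξ j.castSucc)
    refine (tendsto_sub_mul_of_tendsto_sub (p := fun n => ∏ j : Fin N,
        ∫ ω, Complex.exp (Complex.I * ((ξ j.castSucc * S ζ n (φ j.castSucc) ω : ℝ) : ℂ)) ∂P)
      hlast (hinit.congr' ?_)
      (isBoundedUnder_of ⟨1, fun n => norm_integral_exp_I_mul_le_one P _⟩)).congr' ?_
    all_goals filter_upwards [hSψ] with n hn
    · simp only [one_mul, hn]
    · simp only [one_mul, hn, Fin.sum_univ_castSucc, Fin.prod_univ_castSucc]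

/-- If pairs `(S_n(ψ₁), S_n(ψ₂))` are asymptotically independent
for all `ψ₁, ψ₂ ∈ 𝒰` with `δ`-separated supports, then `S_n(φ₁), …, S_n(φ_N)` are
asymptotically independent for all `φ₁, …, φ_N ∈ 𝒰` with pairwise `δ`-separated
supports. -/
theorem stmt5 {d : ℕ} [NeZero d] {Ω : Type*} [MeasurableSpace Ω]
    (P : Measure Ω) [IsProbabilityMeasure P]
    (ζ : (Fin d → ℤ) → Ω → ℝ)
    (hmeas : ∀ k, Measurable (ζ k))
    (δ : ℝ) (hδ : 0 < δ)
    (hpair : ∀ ψ₁ ψ₂ : (Fin d → ℝ) → ℝ, memU ψ₁ → memU ψ₂ →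
      δ ≤ sep (Function.support ψ₁) (Function.support ψ₂) →
      ∀ a b : ℝ,
        Tendsto (fun n : ℕ =>
          (∫ ω, Complex.exp (Complex.I * ((a * S ζ n ψ₁ ω + b * S ζ n ψ₂ ω : ℝ) : ℂ)) ∂P)
            - (∫ ω, Complex.exp (Complex.I * ((a * S ζ n ψ₁ ω : ℝ) : ℂ)) ∂P)
              * (∫ ω, Complex.exp (Complex.I * ((b * S ζ n ψ₂ ω : ℝ) : ℂ)) ∂P))
          atTop (𝓝 0)) :
    ∀ N : ℕ, 2 ≤ N → ∀ φ : Fin N → (Fin d → ℝ) → ℝ, (∀ j, memU (φ j)) →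
      (∀ i j, i ≠ j → δ ≤ sep (Function.support (φ i)) (Function.support (φ j))) →
      ∀ ξ : Fin N → ℝ,
        Tendsto (fun n : ℕ =>
          (∫ ω, Complex.exp (Complex.I * ((∑ j, ξ j * S ζ n (φ j) ω : ℝ) : ℂ)) ∂P)
            - ∏ j, ∫ ω, Complex.exp (Complex.I * ((ξ j * S ζ n (φ j) ω : ℝ) : ℂ)) ∂P)
          atTop (𝓝 0) :=
  stmt5_general P ζ δ hpair
end
end
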